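/- The system of equations a₁x₁ = w₂φ(x₂), a₂x₂ = w₁φ(x₁), b₁w₁ = c₁φ(x₁)φ(x₂), b₂w₂ = c₂φ(x₁)φ(x₂) (with a₁,a₂,b₁,b₂ > 0) has at least one solution (x₁,x₂,w₁,w₂) ∈ ℝ⁴, and every solution lies in the box χ = {|x₁|,|x₂| ≤ x_max, |w₁|,|w₂| ≤ w_max} with w_max = max(|c₁|,|c₂|)/min(b₁,b₂) and x_max = w_max/min(a₁,a₂). -/
import Mathlib

noncomputable def phi (z : ℝ) : ℝ := 1 / (1 + Real.exp (-z))

lemma phi_denom_pos (z : ℝ) : 0 < 1 + Real.exp (-z) := by positivity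

lemma phi_pos (z : ℝ) : 0 < phi z := by
  unfold phi; positivity

lemma phi_le_one (z : ℝ) : phi z ≤ 1 := by
  unfold phi
  rw [div_le_one (phi_denom_pos z)]
  have := (Real.exp_pos (-z)).le
  linarith

lemma phi_mono : Monotone phi := by
  intro x y hxy
  unfold phi
  apply one_div_le_one_div_of_le (phi_denom_pos y)
  have : Real.exp (-y) ≤ Real.exp (-x) := Real.exp_le_exp.mpr (by linarith)
  linarith

lemma continuous_phi : Continuous phi := by
  unfold phi
  exact continuous_const.div
    (continuous_const.add (Real.continuous_exp.comp continuous_neg))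
    (fun z => (phi_denom_pos z).ne')

lemma root_lip {K K' y y' : ℝ} (_hK : K ≤ 0) (hK' : K' ≤ 0)
    (hy : y = K * phi y) (hy' : y' = K' * phi y') : |y - y'| ≤ |K - K'| := by
  have h1 := le_abs_self (K - K')
  have h2 := neg_abs_le (K - K')
  have p1 := phi_pos y
  have p2 := phi_pos y'
  have q1 := phi_le_one y
  have q2 := phi_le_one y'
  rw [abs_sub_le_iff]
  rcases le_total y y' with h | h
  · have hm := phi_mono h
    constructor <;> nlinarith
  · have hm := phi_mono h
    constructor <;> nlinarith

lemma root_exists (K : ℝ) (hK : K ≤ 0) : ∃ y, y = K * phi y := by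
  set f : ℝ → ℝ := fun y => y - K * phi y with hf
  have hc : ContinuousOn f (Set.Icc (K - 1) 1) :=
    (continuous_id.sub (continuous_const.mul continuous_phi)).continuousOn
  have hle : K - 1 ≤ 1 := by linarith
  have h0 : (0 : ℝ) ∈ Set.Icc (f (K - 1)) (f 1) := by
    constructor
    · have := phi_le_one (K - 1)
      have := phi_pos (K - 1)
      simp only [hf]
      nlinarith
    · have := phi_pos 1
      have := phi_le_one 1
      simp only [hf]
      nlinarith
  obtain ⟨y, _, hy⟩ := intermediate_value_Icc hle hc h0
  exact ⟨y, by simpa [hf, sub_eq_zero] using hy⟩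

noncomputable def Psi (K : ℝ) : ℝ := (root_exists (min K 0) (min_le_right K 0)).choose

lemma Psi_spec (K : ℝ) : Psi K = min K 0 * phi (Psi K) :=
  (root_exists (min K 0) (min_le_right K 0)).choose_spec

lemma continuous_Psi : Continuous Psi := by
  apply LipschitzWith.continuous (K := 1)
  apply LipschitzWith.of_dist_le_mul
  intro K K'
  rw [Real.dist_eq, Real.dist_eq, NNReal.coe_one, one_mul]
  have h1 : |Psi K - Psi K'| ≤ |min K 0 - min K' 0| :=
    root_lip (min_le_right K 0) (min_le_right K' 0) (Psi_spec K) (Psi_spec K')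
  have h2 : |min K 0 - min K' 0| ≤ |K - K'| := by
    have ha := le_abs_self (K - K')
    have hb := neg_abs_le (K - K')
    rcases le_total K 0 with h | h <;> rcases le_total K' 0 with h' | h' <;>
      rw [abs_sub_le_iff] <;>
      simp [min_eq_left, min_eq_right, h, h'] <;> constructor <;> linarith
  linarith
lemma phi_sq_le_one (y : ℝ) : phi y ^ 2 ≤ 1 := by
  nlinarith [phi_le_one y, (phi_pos y).le]

lemma phiphi_le_one (x y : ℝ) : phi x * phi y ^ 2 ≤ 1 := by
  nlinarith [phi_le_one x, (phi_pos x).le, phi_sq_le_one y, pow_nonneg (phi_pos y).le 2]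

lemma G_le (A x y : ℝ) (hA : 0 ≤ A) : A * phi x * phi y ^ 2 ≤ A := by
  calc A * phi x * phi y ^ 2 = A * (phi x * phi y ^ 2) := by ring
    _ ≤ A * 1 := mul_le_mul_of_nonneg_left (phiphi_le_one x y) hA
    _ = A := mul_one A

lemma G_le' (B x y : ℝ) (hB : 0 ≤ B) : B * phi x ^ 2 * phi y ≤ B := by
  have h : phi x ^ 2 * phi y ≤ 1 := by
    nlinarith [phi_le_one y, (phi_pos y).le, phi_sq_le_one x, pow_nonneg (phi_pos x).le 2]
  calc B * phi x ^ 2 * phi y = B * (phi x ^ 2 * phi y) := by ring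
    _ ≤ B * 1 := mul_le_mul_of_nonneg_left h hB
    _ = B := mul_one B

lemma G_abs_le (A x y : ℝ) : |A * phi x * phi y ^ 2| ≤ |A| := by
  rw [abs_mul, abs_mul, abs_pow, abs_of_pos (phi_pos x), abs_of_pos (phi_pos y)]
  exact G_le |A| x y (abs_nonneg A)

lemma G_mono (A : ℝ) (hA : 0 ≤ A) {x x' y y' : ℝ} (hx : x ≤ x') (hy : y ≤ y') :
    A * phi x * phi y ^ 2 ≤ A * phi x' * phi y' ^ 2 := by
  have hpow : phi y ^ 2 ≤ phi y' ^ 2 := by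
    nlinarith [phi_mono hy, (phi_pos y).le, (phi_pos y').le]
  calc A * phi x * phi y ^ 2 = A * (phi x * phi y ^ 2) := by ring
    _ ≤ A * (phi x' * phi y' ^ 2) := by
        apply mul_le_mul_of_nonneg_left _ hA
        exact mul_le_mul (phi_mono hx) hpow (pow_nonneg (phi_pos y).le 2) (phi_pos x').le
    _ = A * phi x' * phi y' ^ 2 := by ring

lemma G_mono' (B : ℝ) (hB : 0 ≤ B) {x x' y y' : ℝ} (hx : x ≤ x') (hy : y ≤ y') :
    B * phi x ^ 2 * phi y ≤ B * phi x' ^ 2 * phi y' := by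
  have hpow : phi x ^ 2 ≤ phi x' ^ 2 := by
    nlinarith [phi_mono hx, (phi_pos x).le, (phi_pos x').le]
  calc B * phi x ^ 2 * phi y = B * (phi x ^ 2 * phi y) := by ring
    _ ≤ B * (phi x' ^ 2 * phi y') := by
        apply mul_le_mul_of_nonneg_left _ hB
        exact mul_le_mul hpow (phi_mono hy) (phi_pos y).le (pow_nonneg (phi_pos x').le 2)
    _ = B * phi x' ^ 2 * phi y' := by ring

/-- Existence when the coefficient of the second equation is nonpositive:
eliminate `y` using the unique root function `Psi`, then IVT in `x`. -/
lemma exists_sol (A B : ℝ) (hB : B ≤ 0) :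
    ∃ x y : ℝ, x = A * phi x * phi y ^ 2 ∧ y = B * phi x ^ 2 * phi y := by
  set ψ : ℝ → ℝ := fun x => Psi (B * phi x ^ 2) with hψdef
  have hψ : ∀ x, ψ x = B * phi x ^ 2 * phi (ψ x) := by
    intro x
    have hnp : B * phi x ^ 2 ≤ 0 := mul_nonpos_of_nonpos_of_nonneg hB (by positivity)
    have := Psi_spec (B * phi x ^ 2)
    rwa [min_eq_left hnp] at this
  have hψc : Continuous ψ :=
    continuous_Psi.comp (continuous_const.mul ((continuous_phi).pow 2))
  set f : ℝ → ℝ := fun x => x - A * phi x * phi (ψ x) ^ 2 with hfdef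
  have hfc : ContinuousOn f (Set.Icc (-(|A| + 1)) (|A| + 1)) := by
    apply Continuous.continuousOn
    exact continuous_id.sub ((continuous_const.mul continuous_phi).mul
      ((continuous_phi.comp hψc).pow 2))
  have hle : -(|A| + 1) ≤ |A| + 1 := by
    have := abs_nonneg A; linarith
  have h0 : (0 : ℝ) ∈ Set.Icc (f (-(|A| + 1))) (f (|A| + 1)) := by
    constructor
    · have h := G_abs_le A (-(|A| + 1)) (ψ (-(|A| + 1)))
      have h2 := neg_abs_le (A * phi (-(|A| + 1)) * phi (ψ (-(|A| + 1))) ^ 2)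
      simp only [hfdef]
      have := abs_le.mp h
      linarith [this.1]
    · have h := G_abs_le A (|A| + 1) (ψ (|A| + 1))
      simp only [hfdef]
      have := abs_le.mp h
      linarith [this.2]
  obtain ⟨x, _, hx⟩ := intermediate_value_Icc hle hfc h0
  refine ⟨x, ψ x, ?_, hψ x⟩
  have : x - A * phi x * phi (ψ x) ^ 2 = 0 := hx
  linarith

/-- Existence when both coefficients are nonnegative: Knaster–Tarski. -/
lemma exists_sol_pos (A B : ℝ) (hA : 0 ≤ A) (hB : 0 ≤ B) :
    ∃ x y : ℝ, x = A * phi x * phi y ^ 2 ∧ y = B * phi x ^ 2 * phi y := by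
  set S : Set (ℝ × ℝ) := {p | p.1 ≤ A * phi p.1 * phi p.2 ^ 2 ∧
    p.2 ≤ B * phi p.1 ^ 2 * phi p.2 ∧ p.1 ≤ A ∧ p.2 ≤ B} with hS
  have h00 : ((0 : ℝ), (0 : ℝ)) ∈ S := by
    have h0 := (phi_pos (0 : ℝ)).le
    exact ⟨mul_nonneg (mul_nonneg hA h0) (pow_nonneg h0 2),
      mul_nonneg (mul_nonneg hB (pow_nonneg h0 2)) h0, hA, hB⟩
  have hne : S.Nonempty := ⟨_, h00⟩
  have hne1 : (Prod.fst '' S).Nonempty := hne.image _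
  have hne2 : (Prod.snd '' S).Nonempty := hne.image _
  have hbdd1 : BddAbove (Prod.fst '' S) := by
    refine ⟨A, ?_⟩; rintro _ ⟨p, hp, rfl⟩; exact hp.2.2.1
  have hbdd2 : BddAbove (Prod.snd '' S) := by
    refine ⟨B, ?_⟩; rintro _ ⟨p, hp, rfl⟩; exact hp.2.2.2
  set s₁ := sSup (Prod.fst '' S) with hs₁
  set s₂ := sSup (Prod.snd '' S) with hs₂
  have hmem1 : ∀ p ∈ S, p.1 ≤ s₁ := fun p hp => le_csSup hbdd1 ⟨p, hp, rfl⟩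
  have hmem2 : ∀ p ∈ S, p.2 ≤ s₂ := fun p hp => le_csSup hbdd2 ⟨p, hp, rfl⟩
  have key1 : s₁ ≤ A * phi s₁ * phi s₂ ^ 2 := by
    apply csSup_le hne1
    rintro _ ⟨p, hp, rfl⟩
    exact hp.1.trans (G_mono A hA (hmem1 p hp) (hmem2 p hp))
  have key2 : s₂ ≤ B * phi s₁ ^ 2 * phi s₂ := by
    apply csSup_le hne2
    rintro _ ⟨p, hp, rfl⟩
    exact hp.2.1.trans (G_mono' B hB (hmem1 p hp) (hmem2 p hp))
  set t₁ := A * phi s₁ * phi s₂ ^ 2 with ht₁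
  set t₂ := B * phi s₁ ^ 2 * phi s₂ with ht₂
  have htS : (t₁, t₂) ∈ S := by
    exact ⟨G_mono A hA key1 key2, G_mono' B hB key1 key2,
      G_le A s₁ s₂ hA, G_le' B s₁ s₂ hB⟩
  have ht1 : t₁ ≤ s₁ := hmem1 _ htS
  have ht2 : t₂ ≤ s₂ := hmem2 _ htS
  exact ⟨s₁, s₂, le_antisymm key1 ht1, le_antisymm key2 ht2⟩

lemma exists_sol_all (A B : ℝ) :
    ∃ x y : ℝ, x = A * phi x * phi y ^ 2 ∧ y = B * phi x ^ 2 * phi y := by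
  rcases le_or_gt B 0 with hB | hB
  · exact exists_sol A B hB
  rcases le_or_gt A 0 with hA | hA
  · obtain ⟨u, v, h1, h2⟩ := exists_sol B A hA
    exact ⟨v, u, h2.trans (by ring), h1.trans (by ring)⟩
  · exact exists_sol_pos A B hA.le hB.le
/-- The equilibrium equations of the minimal bidirectional RNN-HL model have at
least one solution, and every solution lies in the box χ. -/
theorem equilibria_exist_and_bounded (a₁ a₂ b₁ b₂ c₁ c₂ : ℝ)
    (ha₁ : 0 < a₁) (ha₂ : 0 < a₂) (hb₁ : 0 < b₁) (hb₂ : 0 < b₂) :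
    (∃ x₁ x₂ w₁ w₂ : ℝ,
        a₁ * x₁ = w₂ * phi x₂ ∧ a₂ * x₂ = w₁ * phi x₁ ∧
        b₁ * w₁ = c₁ * phi x₁ * phi x₂ ∧ b₂ * w₂ = c₂ * phi x₁ * phi x₂) ∧
    (∀ x₁ x₂ w₁ w₂ : ℝ,
        (a₁ * x₁ = w₂ * phi x₂ ∧ a₂ * x₂ = w₁ * phi x₁ ∧
         b₁ * w₁ = c₁ * phi x₁ * phi x₂ ∧ b₂ * w₂ = c₂ * phi x₁ * phi x₂) →
        (|x₁| ≤ (max |c₁| |c₂| / min b₁ b₂) / min a₁ a₂ ∧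
         |x₂| ≤ (max |c₁| |c₂| / min b₁ b₂) / min a₁ a₂ ∧
         |w₁| ≤ max |c₁| |c₂| / min b₁ b₂ ∧
         |w₂| ≤ max |c₁| |c₂| / min b₁ b₂)) := by
  constructor
  · -- existence
    obtain ⟨x, y, hx, hy⟩ := exists_sol_all (c₂ / (a₁ * b₂)) (c₁ / (a₂ * b₁))
    refine ⟨x, y, c₁ * phi x * phi y / b₁, c₂ * phi x * phi y / b₂, ?_, ?_, ?_, ?_⟩
    · field_simp at hx
      rw [div_mul_eq_mul_div, eq_div_iff hb₂.ne']
      linear_combination hx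
    · field_simp at hy
      rw [div_mul_eq_mul_div, eq_div_iff hb₁.ne']
      linear_combination hy
    · field_simp
    · field_simp
  · -- bounds
    rintro x₁ x₂ w₁ w₂ ⟨h1, h2, h3, h4⟩
    have hminb : 0 < min b₁ b₂ := lt_min hb₁ hb₂
    have hmina : 0 < min a₁ a₂ := lt_min ha₁ ha₂
    have hmax0 : 0 ≤ max |c₁| |c₂| := le_trans (abs_nonneg c₁) (le_max_left _ _)
    have hW0 : 0 ≤ max |c₁| |c₂| / min b₁ b₂ := div_nonneg hmax0 hminb.le
    have habs : ∀ z z' c : ℝ, |c * phi z * phi z'| ≤ |c| := by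
      intro z z' c
      rw [abs_mul, abs_mul, abs_of_pos (phi_pos z), abs_of_pos (phi_pos z')]
      calc |c| * phi z * phi z' = |c| * (phi z * phi z') := by ring
        _ ≤ |c| * 1 := by
            apply mul_le_mul_of_nonneg_left _ (abs_nonneg c)
            nlinarith [phi_le_one z, phi_le_one z', (phi_pos z).le, (phi_pos z').le]
        _ = |c| := mul_one _
    have hw₁ : |w₁| ≤ max |c₁| |c₂| / min b₁ b₂ := by
      have hw : w₁ = c₁ * phi x₁ * phi x₂ / b₁ := by
        rw [eq_div_iff hb₁.ne']; linarith
      rw [hw, abs_div, abs_of_pos hb₁]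
      exact div_le_div₀ hmax0 ((habs x₁ x₂ c₁).trans (le_max_left _ _)) hminb
        (min_le_left _ _)
    have hw₂ : |w₂| ≤ max |c₁| |c₂| / min b₁ b₂ := by
      have hw : w₂ = c₂ * phi x₁ * phi x₂ / b₂ := by
        rw [eq_div_iff hb₂.ne']; linarith
      rw [hw, abs_div, abs_of_pos hb₂]
      exact div_le_div₀ hmax0 ((habs x₁ x₂ c₂).trans (le_max_right _ _)) hminb
        (min_le_right _ _)
    have hx₁ : |x₁| ≤ (max |c₁| |c₂| / min b₁ b₂) / min a₁ a₂ := by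
      have hx : x₁ = w₂ * phi x₂ / a₁ := by
        rw [eq_div_iff ha₁.ne']; linarith
      have hnum : |w₂ * phi x₂| ≤ max |c₁| |c₂| / min b₁ b₂ := by
        rw [abs_mul, abs_of_pos (phi_pos x₂)]
        calc |w₂| * phi x₂ ≤ |w₂| * 1 :=
              mul_le_mul_of_nonneg_left (phi_le_one x₂) (abs_nonneg w₂)
          _ = |w₂| := mul_one _
          _ ≤ _ := hw₂
      rw [hx, abs_div, abs_of_pos ha₁]
      exact div_le_div₀ hW0 hnum hmina (min_le_left _ _)
    have hx₂ : |x₂| ≤ (max |c₁| |c₂| / min b₁ b₂) / min a₁ a₂ := by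
      have hx : x₂ = w₁ * phi x₁ / a₂ := by
        rw [eq_div_iff ha₂.ne']; linarith
      have hnum : |w₁ * phi x₁| ≤ max |c₁| |c₂| / min b₁ b₂ := by
        rw [abs_mul, abs_of_pos (phi_pos x₁)]
        calc |w₁| * phi x₁ ≤ |w₁| * 1 :=
              mul_le_mul_of_nonneg_left (phi_le_one x₁) (abs_nonneg w₁)
          _ = |w₁| := mul_one _
          _ ≤ _ := hw₁
      rw [hx, abs_div, abs_of_pos ha₂]
      exact div_le_div₀ hW0 hnum hmina (min_le_right _ _)
    exact ⟨hx₁, hx₂, hw₁, hw₂⟩
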